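/- Fix an integer d ≥ 2 and k ∈ (0,2π) with k ≠ π, and define E(k) := 4 − 4cos(k/2) if k ∈ (0,π) and E(k) := 4 + 4cos(k/2) if k ∈ (π,2π). Then for every E ∈ [0, E(k)), there exists ε > 0 such that for all (x₁,…,x_d) ∈ [0,4]^d with |x₁+…+x_d − E| < ε and all (y₁,…,y_d) ∈ {0,1}^d, one has Σ_{i=1}^d g_k(x_i, y_i) ≥ E + ε/2. -/
import Mathlib


noncomputable section

/-- g_k(x,y) := 2 + (x−2)cos k − sin k·√(x(4−x))·(2y−1). -/
def gWvN (k x y : ℝ) : ℝ :=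
  2 + (x - 2) * Real.cos k - Real.sin k * Real.sqrt (x * (4 - x)) * (2 * y - 1)

/-- E(k) := 4 − 4cos(k/2) for k ∈ (0,π), and 4 + 4cos(k/2) for k ∈ (π,2π). -/
def EWvN (k : ℝ) : ℝ :=
  if k < Real.pi then 4 - 4 * Real.cos (k / 2) else 4 + 4 * Real.cos (k / 2)

lemma gWvN_nonneg (k x y : ℝ) (hx : x ∈ Set.Icc (0:ℝ) 4) (hy : y = 0 ∨ y = 1) :
    0 ≤ gWvN k x y := by
  obtain ⟨hx0, hx4⟩ := hx
  have hp : Real.sqrt x ^ 2 = x := Real.sq_sqrt hx0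
  have hq : Real.sqrt (4 - x) ^ 2 = 4 - x := Real.sq_sqrt (by linarith)
  have hr : Real.sqrt (x * (4 - x)) = Real.sqrt x * Real.sqrt (4 - x) :=
    Real.sqrt_mul hx0 _
  have hck : Real.cos k = 2 * Real.cos (k/2) ^ 2 - 1 := by
    have := Real.cos_two_mul (k/2)
    rw [show 2 * (k/2) = k by ring] at this
    exact this
  have hsk : Real.sin k = 2 * Real.sin (k/2) * Real.cos (k/2) := by
    have := Real.sin_two_mul (k/2)
    rw [show 2 * (k/2) = k by ring] at this
    linarith
  have hsc : Real.sin (k/2) ^ 2 + Real.cos (k/2) ^ 2 = 1 := Real.sin_sq_add_cos_sq _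
  unfold gWvN
  rcases hy with hy | hy <;> subst hy <;> rw [hck, hsk, hr] <;>
    nlinarith [sq_nonneg (Real.cos (k/2) * Real.sqrt x + Real.sin (k/2) * Real.sqrt (4-x)),
      sq_nonneg (Real.cos (k/2) * Real.sqrt x - Real.sin (k/2) * Real.sqrt (4-x)), hp, hq, hsc]

set_option maxHeartbeats 1000000 in
lemma gWvN_key (k x y : ℝ) (hk0 : 0 < k) (hk2 : k < 2 * Real.pi)
    (hx : x ∈ Set.Icc (0:ℝ) 4) (hy : y = 0 ∨ y = 1) :
    EWvN k - x ≤ gWvN k x y := by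
  obtain ⟨hx0, hx4⟩ := hx
  set c := Real.cos (k/2) with hcdef
  set s := Real.sin (k/2) with hsdef
  set p := Real.sqrt x with hpdef
  set q := Real.sqrt (4 - x) with hqdef
  have hp : p ^ 2 = x := Real.sq_sqrt hx0
  have hq : q ^ 2 = 4 - x := Real.sq_sqrt (by linarith)
  have hp0 : 0 ≤ p := Real.sqrt_nonneg _
  have hq0 : 0 ≤ q := Real.sqrt_nonneg _
  have hr : Real.sqrt (x * (4 - x)) = p * q := Real.sqrt_mul hx0 _
  have hck : Real.cos k = 2 * c ^ 2 - 1 := by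
    have := Real.cos_two_mul (k/2)
    rw [show 2 * (k/2) = k by ring] at this
    exact this
  have hsk : Real.sin k = 2 * s * c := by
    have := Real.sin_two_mul (k/2)
    rw [show 2 * (k/2) = k by ring] at this
    linarith [this]
  have hsc : s ^ 2 + c ^ 2 = 1 := Real.sin_sq_add_cos_sq _
  have hpi : 0 < Real.pi := Real.pi_pos
  have hs0 : 0 ≤ s :=
    Real.sin_nonneg_of_nonneg_of_le_pi (by linarith) (by linarith)
  have hspq : 0 ≤ s * (p * q) := mul_nonneg hs0 (mul_nonneg hp0 hq0)
  have hb2 : (s * (p * q)) ^ 2 = (1 - c ^ 2) * (x * (4 - x)) := by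
    have h1 : (s * (p * q)) ^ 2 = s ^ 2 * (p ^ 2 * q ^ 2) := by ring
    rw [h1, hp, hq]
    linear_combination (x * (4 - x)) * hsc
  by_cases hklt : k < Real.pi
  · have hc0 : 0 ≤ c := Real.cos_nonneg_of_mem_Icc ⟨by linarith, by linarith⟩
    have hc1 : c ≤ 1 := Real.cos_le_one _
    have ha : 0 ≤ c * x + 2 - 2 * c := by nlinarith [mul_nonneg hc0 hx0]
    have hsq : (s * (p * q)) ^ 2 ≤ (c * x + 2 - 2 * c) ^ 2 := by
      nlinarith [sq_nonneg (x - 2 + 2 * c), hb2]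
    have hkey : s * (p * q) ≤ c * x + 2 - 2 * c := by
      have := Real.sqrt_le_sqrt hsq
      rwa [Real.sqrt_sq hspq, Real.sqrt_sq ha] at this
    rw [EWvN, if_pos hklt]
    unfold gWvN
    rcases hy with hy | hy <;> subst hy <;> rw [hck, hsk, hr]
    · nlinarith [mul_nonneg hc0 (mul_nonneg hc0 hx0),
        mul_nonneg hc0 (sub_nonneg.mpr hc1), mul_nonneg hc0 hspq]
    · nlinarith [mul_nonneg hc0 (sub_nonneg.mpr hkey)]
  · have hge : Real.pi ≤ k := le_of_not_gt hklt
    have hc0 : c ≤ 0 :=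
      Real.cos_nonpos_of_pi_div_two_le_of_le (by linarith) (by linarith)
    have hn0 : 0 ≤ -c := by linarith
    have hn1 : -c ≤ 1 := by linarith [Real.neg_one_le_cos (k/2)]
    have ha : 0 ≤ -c * x + 2 + 2 * c := by nlinarith [mul_nonneg hn0 hx0]
    have hsq : (s * (p * q)) ^ 2 ≤ (-c * x + 2 + 2 * c) ^ 2 := by
      nlinarith [sq_nonneg (x - 2 - 2 * c), hb2]
    have hkey : s * (p * q) ≤ -c * x + 2 + 2 * c := by
      have := Real.sqrt_le_sqrt hsq
      rwa [Real.sqrt_sq hspq, Real.sqrt_sq ha] at this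
    rw [EWvN, if_neg hklt]
    unfold gWvN
    rcases hy with hy | hy <;> subst hy <;> rw [hck, hsk, hr]
    · nlinarith [mul_nonneg hn0 (sub_nonneg.mpr hkey)]
    · nlinarith [mul_nonneg hn0 (mul_nonneg hn0 hx0),
        mul_nonneg hn0 (sub_nonneg.mpr hn1), mul_nonneg hn0 hspq]

/-- For d ≥ 2, k ∈ (0,2π)∖{π} and E ∈ [0, E(k)), there exists ε > 0 such that
for all (x₁,…,x_d) ∈ [0,4]^d with |Σx_i − E| < ε and all y ∈ {0,1}^d,
Σ_i g_k(x_i,y_i) ≥ E + ε/2. -/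
theorem gWvN_multidim_separation (d : ℕ) (hd : 2 ≤ d)
    (k : ℝ) (hk0 : 0 < k) (hk2 : k < 2 * Real.pi) (hkpi : k ≠ Real.pi)
    (E : ℝ) (hE : E ∈ Set.Ico 0 (EWvN k)) :
    ∃ ε > 0, ∀ x : Fin d → ℝ, (∀ i, x i ∈ Set.Icc (0 : ℝ) 4) →
      |(∑ i, x i) - E| < ε →
      ∀ y : Fin d → ℝ, (∀ i, y i = 0 ∨ y i = 1) →
        (∑ i, gWvN k (x i) (y i)) ≥ E + ε / 2 := by
  obtain ⟨hE0, hElt⟩ := hE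
  have hεpos : 0 < EWvN k - E := by linarith
  refine ⟨EWvN k - E, hεpos, ?_⟩
  intro x hx hsum y hy
  set i0 : Fin d := ⟨0, by omega⟩ with hi0
  set i1 : Fin d := ⟨1, by omega⟩ with hi1
  have hne : i0 ≠ i1 := by
    simp [hi0, hi1, Fin.ext_iff]
  have hx2 : x i0 + x i1 ≤ ∑ i, x i := by
    have h := Finset.sum_le_sum_of_subset_of_nonneg
      (Finset.subset_univ ({i0, i1} : Finset (Fin d)))
      (fun i _ _ => (hx i).1)
    rwa [Finset.sum_pair hne] at h
  have hg2 : gWvN k (x i0) (y i0) + gWvN k (x i1) (y i1)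
      ≤ ∑ i, gWvN k (x i) (y i) := by
    have h := Finset.sum_le_sum_of_subset_of_nonneg
      (Finset.subset_univ ({i0, i1} : Finset (Fin d)))
      (fun i _ _ => gWvN_nonneg k (x i) (y i) (hx i) (hy i))
    rwa [Finset.sum_pair hne] at h
  have hb0 : EWvN k - x i0 ≤ gWvN k (x i0) (y i0) :=
    gWvN_key k (x i0) (y i0) hk0 hk2 (hx i0) (hy i0)
  have hb1 : EWvN k - x i1 ≤ gWvN k (x i1) (y i1) :=
    gWvN_key k (x i1) (y i1) hk0 hk2 (hx i1) (hy i1)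
  have hsum' : (∑ i, x i) - E < EWvN k - E := (abs_lt.mp hsum).2
  linarith

end
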